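/- arXiv:2505.01210 — 4 statements merged into one kernel-verified Lean document; each statement's English description precedes it below -/
import Mathlib

section
/- Let n ≥ 2 be a natural number, let α ≥ 7 be a real number, and let t be a natural number with t ≥ 4·n·log n. Consider t independent samples, each uniformly distributed over the 2-element subsets of Fin n, and for each i ∈ Fin n let X_i denote the number of sampled pairs containing i. Then with probability at least 1 − 2/n², every i ∈ Fin n satisfies t/(α·n) ≤ X_i ≤ α·t/n. -/
open Finset

attribute [local instance] Classical.propDecidable

lemma cardS (n : ℕ) : Fintype.card {s : Finset (Fin n) // s.card = 2} = n.choose 2 := by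
  rw [Fintype.card_subtype]
  have h : (univ.filter fun s : Finset (Fin n) => s.card = 2)
      = (univ : Finset (Fin n)).powersetCard 2 := by
    ext s; simp [Finset.mem_powersetCard, Finset.subset_univ]
  rw [h, Finset.card_powersetCard, Finset.card_univ, Fintype.card_fin]

lemma cardA (n : ℕ) (i : Fin n) :
    (univ.filter fun s : {s : Finset (Fin n) // s.card = 2} => i ∈ s.1).card = n - 1 := by
  have h2 : ((univ : Finset (Fin n)).erase i).card = n - 1 := by
    rw [Finset.card_erase_of_mem (Finset.mem_univ i), Finset.card_univ, Fintype.card_fin]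
  rw [← h2]
  symm
  apply Finset.card_bij (fun j hj => (⟨{i, j}, by
    rw [Finset.card_insert_of_notMem (by simp [Ne.symm (Finset.ne_of_mem_erase hj)]),
      Finset.card_singleton]⟩ : {s : Finset (Fin n) // s.card = 2}))
  · intro j hj
    simp
  · intro j hj j' hj' h
    have := congrArg (fun s => s.1) h
    simp only [Subtype.coe_mk] at this
    have hji : j ≠ i := Finset.ne_of_mem_erase hj
    have : j ∈ ({i, j'} : Finset (Fin n)) := by rw [← this]; simp
    simp only [Finset.mem_insert, Finset.mem_singleton] at this
    tauto
  · intro s hs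
    simp only [Finset.mem_filter, Finset.mem_univ, true_and] at hs
    have hc : (s.1.erase i).card = 1 := by
      rw [Finset.card_erase_of_mem hs, s.2]
    obtain ⟨j, hj⟩ := Finset.card_eq_one.mp hc
    have hji : j ≠ i := by
      intro h; subst h
      have : j ∈ s.1.erase j := by rw [hj]; simp
      exact (Finset.notMem_erase j s.1) this
    refine ⟨j, Finset.mem_erase.mpr ⟨hji, Finset.mem_univ j⟩, ?_⟩
    apply Subtype.ext
    have : insert i (s.1.erase i) = s.1 := Finset.insert_erase hs
    simp only [Subtype.coe_mk]
    rw [hj] at this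
    rw [← this]

lemma mgf (n t : ℕ) (i : Fin n) (r : ℝ) :
    (∑ ω : Fin t → {s : Finset (Fin n) // s.card = 2},
        r ^ ((univ.filter fun j : Fin t => i ∈ (ω j).1).card))
      = (((n : ℝ) - 1) * r + ((n.choose 2 : ℝ) - ((n : ℝ) - 1))) ^ t := by
  have key : ∀ ω : Fin t → {s : Finset (Fin n) // s.card = 2},
      r ^ ((univ.filter fun j : Fin t => i ∈ (ω j).1).card)
        = ∏ j : Fin t, (if i ∈ (ω j).1 then r else 1) := by
    intro ω
    rw [← Finset.prod_filter, Finset.prod_const]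
  simp_rw [key]
  rw [← Fintype.prod_sum (fun (_ : Fin t) (s : {s : Finset (Fin n) // s.card = 2}) =>
    if i ∈ s.1 then r else 1)]
  have hsum : (∑ s : {s : Finset (Fin n) // s.card = 2}, if i ∈ s.1 then r else 1)
      = ((n : ℝ) - 1) * r + ((n.choose 2 : ℝ) - ((n : ℝ) - 1)) := by
    rw [Finset.sum_ite, Finset.sum_const, Finset.sum_const, cardA]
    have hsplit : (n - 1) + (univ.filter fun s : {s : Finset (Fin n) // s.card = 2} =>
        ¬ i ∈ s.1).card = n.choose 2 := by
      have := Finset.card_filter_add_card_filter_not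
        (s := (univ : Finset {s : Finset (Fin n) // s.card = 2}))
        (p := fun s => i ∈ s.1)
      rw [cardA, Finset.card_univ, cardS] at this
      exact this
    have h2 : n - 1 ≤ n.choose 2 := by omega
    have hcard : (univ.filter fun s : {s : Finset (Fin n) // s.card = 2} => ¬ i ∈ s.1).card
        = n.choose 2 - (n - 1) := by omega
    rw [hcard]
    have h1 : (1:ℕ) ≤ n := i.pos
    rw [nsmul_eq_mul, nsmul_eq_mul, Nat.cast_sub h2, Nat.cast_sub h1]
    push_cast
    ring
  rw [hsum, Finset.prod_const, Finset.card_univ, Fintype.card_fin]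

lemma markov_le {Ω : Type*} [Fintype Ω] (f : Ω → ℕ) (r c : ℝ) (hr0 : 0 < r) (hr1 : r ≤ 1) :
    ((univ.filter fun ω => (f ω : ℝ) ≤ c).card : ℝ) * r ^ c ≤ ∑ ω, r ^ (f ω) := by
  calc ((univ.filter fun ω => (f ω : ℝ) ≤ c).card : ℝ) * r ^ c
      = ∑ _ω ∈ univ.filter fun ω => (f ω : ℝ) ≤ c, r ^ c := by
        rw [Finset.sum_const, nsmul_eq_mul]
    _ ≤ ∑ ω ∈ univ.filter fun ω => (f ω : ℝ) ≤ c, r ^ (f ω) := by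
        apply Finset.sum_le_sum
        intro ω hω
        simp only [Finset.mem_filter] at hω
        have : r ^ ((f ω : ℝ)) ≤ r ^ (f ω) := by
          rw [Real.rpow_natCast]
        calc r ^ c ≤ r ^ ((f ω : ℝ)) := Real.rpow_le_rpow_of_exponent_ge hr0 hr1 hω.2
          _ = r ^ (f ω) := by rw [Real.rpow_natCast]
    _ ≤ ∑ ω, r ^ (f ω) := by
        apply Finset.sum_le_sum_of_subset_of_nonneg (Finset.filter_subset _ _)
        intro ω _ _
        positivity

lemma markov_ge {Ω : Type*} [Fintype Ω] (f : Ω → ℕ) (r c : ℝ) (hr1 : 1 ≤ r) :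
    ((univ.filter fun ω => c ≤ (f ω : ℝ)).card : ℝ) * r ^ c ≤ ∑ ω, r ^ (f ω) := by
  have hr0 : (0:ℝ) < r := lt_of_lt_of_le one_pos hr1
  calc ((univ.filter fun ω => c ≤ (f ω : ℝ)).card : ℝ) * r ^ c
      = ∑ _ω ∈ univ.filter fun ω => c ≤ (f ω : ℝ), r ^ c := by
        rw [Finset.sum_const]; rw [nsmul_eq_mul]
    _ ≤ ∑ ω ∈ univ.filter fun ω => c ≤ (f ω : ℝ), r ^ (f ω) := by
        apply Finset.sum_le_sum
        intro ω hω
        simp only [Finset.mem_filter] at hω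
        calc r ^ c ≤ r ^ ((f ω : ℝ)) := Real.rpow_le_rpow_of_exponent_le hr1 hω.2
          _ = r ^ (f ω) := by rw [Real.rpow_natCast]
    _ ≤ ∑ ω, r ^ (f ω) := by
        apply Finset.sum_le_sum_of_subset_of_nonneg (Finset.filter_subset _ _)
        intro ω _ _
        positivity

lemma log14_le : Real.log 14 ≤ 3 := by
  rw [Real.log_le_iff_le_exp (by norm_num)]
  have h := Real.exp_one_gt_d9
  have h3 : Real.exp 3 = Real.exp 1 ^ (3:ℕ) := by
    rw [← Real.exp_nat_mul]; norm_num
  have h4 : (2.7182818283:ℝ)^(3:ℕ) < Real.exp 1 ^ (3:ℕ) :=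
    pow_lt_pow_left₀ h (by norm_num) (by norm_num)
  rw [h3]
  nlinarith [h4]

lemma one_le_log3 : (1:ℝ) ≤ Real.log 3 := by
  rw [Real.le_log_iff_exp_le (by norm_num)]
  have h := Real.exp_one_lt_d9
  linarith

lemma mgf_eq (n t : ℕ) (hn : 2 ≤ n) (i : Fin n) (r : ℝ) :
    (∑ ω : Fin t → {s : Finset (Fin n) // s.card = 2},
        r ^ ((univ.filter fun j : Fin t => i ∈ (ω j).1).card))
      = ((n.choose 2 : ℝ)) ^ t * (1 + (2/(n:ℝ))*(r-1)) ^ t := by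
  rw [mgf, ← mul_pow]
  congr 1
  rw [Nat.cast_choose_two]
  have hN : (n:ℝ) ≠ 0 := by positivity
  field_simp
  ring

lemma tail_lo (n t : ℕ) (hn : 2 ≤ n) (ht : 4*(n:ℝ)*Real.log n ≤ t) (i : Fin n) :
    ((univ.filter fun ω : Fin t → {s : Finset (Fin n) // s.card = 2} =>
        ((univ.filter fun j : Fin t => i ∈ (ω j).1).card : ℝ) ≤ (t:ℝ)/(7*(n:ℝ))).card : ℝ)
      ≤ (((n:ℝ))^3)⁻¹ * ((n.choose 2 : ℝ)) ^ t := by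
  have hN0 : (0:ℝ) < (n:ℝ) := by
    have : (0:ℕ) < n := by omega
    exact_mod_cast this
  have hN2 : (2:ℝ) ≤ (n:ℝ) := by exact_mod_cast hn
  have hL0 : 0 ≤ Real.log n := Real.log_nonneg (by linarith)
  have hT0 : (0:ℝ) ≤ t := Nat.cast_nonneg t
  set c : ℝ := (t:ℝ)/(7*(n:ℝ)) with hc
  have hc0 : 0 ≤ c := by positivity
  have hm := markov_le (f := fun ω : Fin t → {s : Finset (Fin n) // s.card = 2} =>
    (univ.filter fun j : Fin t => i ∈ (ω j).1).card) ((14:ℝ)⁻¹) c (by norm_num) (by norm_num)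
  rw [mgf_eq n t hn i] at hm
  -- bound the factor
  have hfe : (1 + (2/(n:ℝ))*((14:ℝ)⁻¹-1)) ≤ Real.exp (-(13/(7*(n:ℝ)))) := by
    have h0 : (2/(n:ℝ))*((14:ℝ)⁻¹-1) = -(13/(7*(n:ℝ))) := by
      field_simp; ring
    rw [h0, add_comm]
    exact Real.add_one_le_exp _
  have hfnn : (0:ℝ) ≤ 1 + (2/(n:ℝ))*((14:ℝ)⁻¹-1) := by
    have h1 : 2/(n:ℝ) ≤ 1 := by rw [div_le_one hN0]; linarith
    have h2 : (0:ℝ) ≤ 2/(n:ℝ) := by positivity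
    nlinarith
  have hfpow : (1 + (2/(n:ℝ))*((14:ℝ)⁻¹-1)) ^ t ≤ Real.exp (-(13/(7*(n:ℝ))) * t) := by
    calc (1 + (2/(n:ℝ))*((14:ℝ)⁻¹-1)) ^ t ≤ (Real.exp (-(13/(7*(n:ℝ))))) ^ t :=
          pow_le_pow_left₀ hfnn hfe t
      _ = Real.exp (-(13/(7*(n:ℝ))) * t) := by
          rw [← Real.exp_nat_mul]; ring_nf
  have hpos : (0:ℝ) < ((14:ℝ)⁻¹) ^ c := Real.rpow_pos_of_pos (by norm_num) c
  have hB0 : (0:ℝ) < ((n.choose 2 : ℝ)) := by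
    have : 0 < n.choose 2 := Nat.choose_pos hn
    exact_mod_cast this
  have hBt : (0:ℝ) ≤ ((n.choose 2 : ℝ)) ^ t := by positivity
  -- card ≤ B^t * exp(...) * 14^c
  have hstep : ((univ.filter fun ω : Fin t → {s : Finset (Fin n) // s.card = 2} =>
        ((univ.filter fun j : Fin t => i ∈ (ω j).1).card : ℝ) ≤ c).card : ℝ)
      ≤ ((n.choose 2 : ℝ)) ^ t * (Real.exp (-(13/(7*(n:ℝ))) * t) * (14:ℝ) ^ c) := by
    rw [← le_div_iff₀ hpos] at hm
    refine hm.trans ?_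
    rw [Real.inv_rpow (by norm_num), div_eq_mul_inv, inv_inv, mul_assoc]
    apply mul_le_mul_of_nonneg_left _ hBt
    apply mul_le_mul_of_nonneg_right hfpow (le_of_lt (Real.rpow_pos_of_pos (by norm_num) c))
  -- exponential estimate
  have hexp : Real.exp (-(13/(7*(n:ℝ))) * t) * (14:ℝ) ^ c ≤ (((n:ℝ))^3)⁻¹ := by
    rw [Real.rpow_def_of_pos (by norm_num : (0:ℝ) < 14), ← Real.exp_add]
    have hgoal : (((n:ℝ))^3)⁻¹ = Real.exp (-(3 * Real.log n)) := by
      rw [Real.exp_neg]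
      congr 1
      rw [show (3:ℝ) * Real.log n = (3:ℕ) * Real.log n by norm_num,
        Real.exp_nat_mul, Real.exp_log hN0]
    rw [hgoal]
    apply Real.exp_le_exp.mpr
    have hlog := log14_le
    set u : ℝ := (t:ℝ)/(n:ℝ) with hu
    have hu0 : (0:ℝ) ≤ u := by positivity
    have htn : 4 * Real.log n ≤ u := by
      rw [hu, le_div_iff₀ hN0]
      nlinarith
    have heq1 : -(13/(7*(n:ℝ)))*(t:ℝ) = -(13/7)*u := by
      rw [hu]; ring
    have heq2 : Real.log 14 * c = Real.log 14 * (u/7) := by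
      rw [hc, hu]; ring
    rw [heq1, heq2]
    nlinarith [mul_nonneg (sub_nonneg.mpr hlog) hu0]
  calc ((univ.filter fun ω : Fin t → {s : Finset (Fin n) // s.card = 2} =>
        ((univ.filter fun j : Fin t => i ∈ (ω j).1).card : ℝ) ≤ c).card : ℝ)
      ≤ ((n.choose 2 : ℝ)) ^ t * (Real.exp (-(13/(7*(n:ℝ))) * t) * (14:ℝ) ^ c) := hstep
    _ ≤ ((n.choose 2 : ℝ)) ^ t * (((n:ℝ))^3)⁻¹ := mul_le_mul_of_nonneg_left hexp hBt
    _ = (((n:ℝ))^3)⁻¹ * ((n.choose 2 : ℝ)) ^ t := by ring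

lemma tail_hi (n t : ℕ) (hn : 2 ≤ n) (ht : 4*(n:ℝ)*Real.log n ≤ t) (i : Fin n) :
    ((univ.filter fun ω : Fin t → {s : Finset (Fin n) // s.card = 2} =>
        7*(t:ℝ)/(n:ℝ) ≤ ((univ.filter fun j : Fin t => i ∈ (ω j).1).card : ℝ)).card : ℝ)
      ≤ (((n:ℝ))^3)⁻¹ * ((n.choose 2 : ℝ)) ^ t := by
  have hN0 : (0:ℝ) < (n:ℝ) := by
    have : (0:ℕ) < n := by omega
    exact_mod_cast this
  have hN2 : (2:ℝ) ≤ (n:ℝ) := by exact_mod_cast hn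
  have hL0 : 0 ≤ Real.log n := Real.log_nonneg (by linarith)
  have hT0 : (0:ℝ) ≤ t := Nat.cast_nonneg t
  set c : ℝ := 7*(t:ℝ)/(n:ℝ) with hc
  have hc0 : 0 ≤ c := by positivity
  have hm := markov_ge (f := fun ω : Fin t → {s : Finset (Fin n) // s.card = 2} =>
    (univ.filter fun j : Fin t => i ∈ (ω j).1).card) (3:ℝ) c (by norm_num)
  rw [mgf_eq n t hn i] at hm
  have hfe : (1 + (2/(n:ℝ))*((3:ℝ)-1)) ≤ Real.exp (4/(n:ℝ)) := by
    have h0 : (2/(n:ℝ))*((3:ℝ)-1) = 4/(n:ℝ) := by ring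
    rw [h0, add_comm]
    exact Real.add_one_le_exp _
  have hfnn : (0:ℝ) ≤ 1 + (2/(n:ℝ))*((3:ℝ)-1) := by positivity
  have hfpow : (1 + (2/(n:ℝ))*((3:ℝ)-1)) ^ t ≤ Real.exp (4/(n:ℝ) * t) := by
    calc (1 + (2/(n:ℝ))*((3:ℝ)-1)) ^ t ≤ (Real.exp (4/(n:ℝ))) ^ t :=
          pow_le_pow_left₀ hfnn hfe t
      _ = Real.exp (4/(n:ℝ) * t) := by rw [← Real.exp_nat_mul]; ring_nf
  have hpos : (0:ℝ) < (3:ℝ) ^ c := Real.rpow_pos_of_pos (by norm_num) c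
  have hB0 : (0:ℝ) < ((n.choose 2 : ℝ)) := by
    have : 0 < n.choose 2 := Nat.choose_pos hn
    exact_mod_cast this
  have hBt : (0:ℝ) ≤ ((n.choose 2 : ℝ)) ^ t := by positivity
  have hstep : ((univ.filter fun ω : Fin t → {s : Finset (Fin n) // s.card = 2} =>
        c ≤ ((univ.filter fun j : Fin t => i ∈ (ω j).1).card : ℝ)).card : ℝ)
      ≤ ((n.choose 2 : ℝ)) ^ t * (Real.exp (4/(n:ℝ) * t) * ((3:ℝ) ^ c)⁻¹) := by
    rw [← le_div_iff₀ hpos] at hm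
    refine hm.trans ?_
    rw [div_eq_mul_inv, mul_assoc]
    apply mul_le_mul_of_nonneg_left _ hBt
    apply mul_le_mul_of_nonneg_right hfpow (by positivity)
  have hexp : Real.exp (4/(n:ℝ) * t) * ((3:ℝ) ^ c)⁻¹ ≤ (((n:ℝ))^3)⁻¹ := by
    rw [Real.rpow_def_of_pos (by norm_num : (0:ℝ) < 3), ← Real.exp_neg, ← Real.exp_add]
    have hgoal : (((n:ℝ))^3)⁻¹ = Real.exp (-(3 * Real.log n)) := by
      rw [Real.exp_neg]
      congr 1
      rw [show (3:ℝ) * Real.log n = (3:ℕ) * Real.log n by norm_num,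
        Real.exp_nat_mul, Real.exp_log hN0]
    rw [hgoal]
    apply Real.exp_le_exp.mpr
    have hlog := one_le_log3
    set u : ℝ := (t:ℝ)/(n:ℝ) with hu
    have hu0 : (0:ℝ) ≤ u := by positivity
    have htn : 4 * Real.log n ≤ u := by
      rw [hu, le_div_iff₀ hN0]
      nlinarith
    have heq1 : 4/(n:ℝ)*(t:ℝ) = 4*u := by rw [hu]; ring
    have heq2 : Real.log 3 * c = Real.log 3 * (7*u) := by rw [hc, hu]; ring
    rw [heq1, heq2]
    nlinarith [mul_nonneg (sub_nonneg.mpr hlog) hu0]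
  calc ((univ.filter fun ω : Fin t → {s : Finset (Fin n) // s.card = 2} =>
        c ≤ ((univ.filter fun j : Fin t => i ∈ (ω j).1).card : ℝ)).card : ℝ)
      ≤ ((n.choose 2 : ℝ)) ^ t * (Real.exp (4/(n:ℝ) * t) * ((3:ℝ) ^ c)⁻¹) := hstep
    _ ≤ ((n.choose 2 : ℝ)) ^ t * (((n:ℝ))^3)⁻¹ := mul_le_mul_of_nonneg_left hexp hBt
    _ = (((n:ℝ))^3)⁻¹ * ((n.choose 2 : ℝ)) ^ t := by ring

/-- Lemma A.1: among `t` i.i.d. uniformly random unordered pairs of distinct elements of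
`Fin n`, with probability at least `1 - 2/n²` every agent `i` appears in between
`t/(α·n)` and `α·t/n` of the pairs. -/
theorem interactions_count_bound (n t : ℕ) (α : ℝ) (hn : 2 ≤ n) (hα : 7 ≤ α)
    (ht : 4 * (n : ℝ) * Real.log n ≤ t) :
    1 - 2 / (n : ℝ) ^ 2 ≤
      (Fintype.card {ω : Fin t → {s : Finset (Fin n) // s.card = 2} //
          ∀ i : Fin n,
            (t : ℝ) / (α * n) ≤ (univ.filter fun j : Fin t => i ∈ (ω j).1).card ∧
            ((univ.filter fun j : Fin t => i ∈ (ω j).1).card : ℝ) ≤ α * t / n} : ℝ) /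
        (Fintype.card (Fin t → {s : Finset (Fin n) // s.card = 2}) : ℝ) := by
  classical
  have hN0 : (0:ℝ) < (n:ℝ) := by
    have : (0:ℕ) < n := by omega
    exact_mod_cast this
  have hT0 : (0:ℝ) ≤ t := Nat.cast_nonneg t
  have hB0 : (0:ℝ) < ((n.choose 2 : ℝ)) := by
    have : 0 < n.choose 2 := Nat.choose_pos hn
    exact_mod_cast this
  have hBt0 : (0:ℝ) < ((n.choose 2 : ℝ)) ^ t := by positivity
  set P : Fin n → (Fin t → {s : Finset (Fin n) // s.card = 2}) → Prop := fun i ω =>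
    (t : ℝ) / (α * n) ≤ (univ.filter fun j : Fin t => i ∈ (ω j).1).card ∧
      ((univ.filter fun j : Fin t => i ∈ (ω j).1).card : ℝ) ≤ α * t / n with hP
  have hΩ : (Fintype.card (Fin t → {s : Finset (Fin n) // s.card = 2}) : ℝ)
      = ((n.choose 2 : ℝ)) ^ t := by
    rw [Fintype.card_fun, cardS, Fintype.card_fin]
    push_cast
    ring
  -- the subtype card as filter card
  have hgood : (Fintype.card {ω : Fin t → {s : Finset (Fin n) // s.card = 2} //
      ∀ i : Fin n, P i ω}) = (univ.filter fun ω : Fin t → {s : Finset (Fin n) // s.card = 2} =>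
      ∀ i : Fin n, P i ω).card := Fintype.card_subtype _
  -- bad set bound
  have hsub : (univ.filter fun ω : Fin t → {s : Finset (Fin n) // s.card = 2} =>
        ¬ ∀ i : Fin n, P i ω)
      ⊆ univ.biUnion (fun i : Fin n =>
        (univ.filter fun ω : Fin t → {s : Finset (Fin n) // s.card = 2} =>
          ((univ.filter fun j : Fin t => i ∈ (ω j).1).card : ℝ) ≤ (t:ℝ)/(7*(n:ℝ))) ∪
        (univ.filter fun ω : Fin t → {s : Finset (Fin n) // s.card = 2} =>
          7*(t:ℝ)/(n:ℝ) ≤ ((univ.filter fun j : Fin t => i ∈ (ω j).1).card : ℝ))) := by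
    intro ω hω
    simp only [Finset.mem_filter, Finset.mem_univ, true_and] at hω
    push_neg at hω
    obtain ⟨i, hi⟩ := hω
    rw [Finset.mem_biUnion]
    refine ⟨i, Finset.mem_univ i, ?_⟩
    rw [Finset.mem_union]
    simp only [hP] at hi
    rw [not_and_or] at hi
    rcases hi with hA | hB
    · left
      simp only [Finset.mem_filter, Finset.mem_univ, true_and]
      have hlt := lt_of_not_ge hA
      have h7 : (t:ℝ)/(α*(n:ℝ)) ≤ (t:ℝ)/(7*(n:ℝ)) := by gcongr
      linarith
    · right
      simp only [Finset.mem_filter, Finset.mem_univ, true_and]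
      have hlt := lt_of_not_ge hB
      have h7 : 7*(t:ℝ)/(n:ℝ) ≤ α * t / n := by gcongr
      linarith
  have hbadN : ((univ.filter fun ω : Fin t → {s : Finset (Fin n) // s.card = 2} =>
      ¬ ∀ i : Fin n, P i ω).card : ℝ) ≤ 2/(n:ℝ)^2 * ((n.choose 2 : ℝ)) ^ t := by
    have h1 := (Finset.card_le_card hsub).trans Finset.card_biUnion_le
    have h2 : ((univ.filter fun ω : Fin t → {s : Finset (Fin n) // s.card = 2} =>
        ¬ ∀ i : Fin n, P i ω).card : ℝ)
        ≤ ∑ i : Fin n, (((univ.filter fun ω : Fin t → {s : Finset (Fin n) // s.card = 2} =>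
            ((univ.filter fun j : Fin t => i ∈ (ω j).1).card : ℝ) ≤ (t:ℝ)/(7*(n:ℝ))).card : ℝ) +
          ((univ.filter fun ω : Fin t → {s : Finset (Fin n) // s.card = 2} =>
            7*(t:ℝ)/(n:ℝ) ≤ ((univ.filter fun j : Fin t => i ∈ (ω j).1).card : ℝ)).card : ℝ)) := by
      calc ((univ.filter fun ω : Fin t → {s : Finset (Fin n) // s.card = 2} =>
          ¬ ∀ i : Fin n, P i ω).card : ℝ)
          ≤ ((∑ i : Fin n, ((univ.filter fun ω : Fin t → {s : Finset (Fin n) // s.card = 2} =>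
              ((univ.filter fun j : Fin t => i ∈ (ω j).1).card : ℝ) ≤ (t:ℝ)/(7*(n:ℝ))) ∪
            (univ.filter fun ω : Fin t → {s : Finset (Fin n) // s.card = 2} =>
              7*(t:ℝ)/(n:ℝ) ≤ ((univ.filter fun j : Fin t => i ∈ (ω j).1).card : ℝ))).card : ℕ) : ℝ) := by
            exact_mod_cast h1
        _ ≤ _ := by
            push_cast
            apply Finset.sum_le_sum
            intro i _
            exact_mod_cast Finset.card_union_le _ _
    refine h2.trans ?_
    have h3 : ∀ i : Fin n, (((univ.filter fun ω : Fin t → {s : Finset (Fin n) // s.card = 2} =>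
            ((univ.filter fun j : Fin t => i ∈ (ω j).1).card : ℝ) ≤ (t:ℝ)/(7*(n:ℝ))).card : ℝ) +
          ((univ.filter fun ω : Fin t → {s : Finset (Fin n) // s.card = 2} =>
            7*(t:ℝ)/(n:ℝ) ≤ ((univ.filter fun j : Fin t => i ∈ (ω j).1).card : ℝ)).card : ℝ))
        ≤ 2 * (((n:ℝ))^3)⁻¹ * ((n.choose 2 : ℝ)) ^ t := by
      intro i
      have := tail_lo n t hn ht i
      have := tail_hi n t hn ht i
      linarith
    calc (∑ i : Fin n, (((univ.filter fun ω : Fin t → {s : Finset (Fin n) // s.card = 2} =>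
            ((univ.filter fun j : Fin t => i ∈ (ω j).1).card : ℝ) ≤ (t:ℝ)/(7*(n:ℝ))).card : ℝ) +
          ((univ.filter fun ω : Fin t → {s : Finset (Fin n) // s.card = 2} =>
            7*(t:ℝ)/(n:ℝ) ≤ ((univ.filter fun j : Fin t => i ∈ (ω j).1).card : ℝ)).card : ℝ)))
        ≤ ∑ _i : Fin n, 2 * (((n:ℝ))^3)⁻¹ * ((n.choose 2 : ℝ)) ^ t :=
          Finset.sum_le_sum (fun i _ => h3 i)
      _ = (n:ℝ) * (2 * (((n:ℝ))^3)⁻¹ * ((n.choose 2 : ℝ)) ^ t) := by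
          rw [Finset.sum_const, Finset.card_univ, Fintype.card_fin, nsmul_eq_mul]
      _ = 2/(n:ℝ)^2 * ((n.choose 2 : ℝ)) ^ t := by
          have hne : (n:ℝ) ≠ 0 := ne_of_gt hN0
          field_simp
  -- combine
  have hsplit : (univ.filter fun ω : Fin t → {s : Finset (Fin n) // s.card = 2} =>
        ∀ i : Fin n, P i ω).card
      + (univ.filter fun ω : Fin t → {s : Finset (Fin n) // s.card = 2} =>
        ¬ ∀ i : Fin n, P i ω).card
      = Fintype.card (Fin t → {s : Finset (Fin n) // s.card = 2}) := by
    rw [Finset.card_filter_add_card_filter_not, Finset.card_univ]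
  rw [hgood, hΩ, le_div_iff₀ hBt0]
  have hsplitR : ((univ.filter fun ω : Fin t → {s : Finset (Fin n) // s.card = 2} =>
        ∀ i : Fin n, P i ω).card : ℝ)
      + ((univ.filter fun ω : Fin t → {s : Finset (Fin n) // s.card = 2} =>
        ¬ ∀ i : Fin n, P i ω).card : ℝ)
      = ((n.choose 2 : ℝ)) ^ t := by
    rw [← hΩ]
    exact_mod_cast hsplit
  nlinarith [hbadN, hsplitR]
end

section
/- For every natural number k ≥ 1, the real number (1/2 − 1/(10·k))^k is at least 1/(2·2^k), and the real number (1/2 + 1/(10·k))^k is at most 2/2^k. -/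
/-!
Write `1/2 ∓ x` with `x = 1/(10k)`. Bernoulli's inequality gives `(1 - 2x)^k ≥ 1 - 2kx ≥ 4/5`,
which is the lower bound. The upper bound follows from the lower one, because the two biases
pair off: `(1/2 + x)^k (1/2 - x)^k = (1/4 - x²)^k ≤ 4^{-k}`.
-/

lemma one_sub_mul_div_two_pow_le_half_sub_pow (n : ℕ) {x : ℝ} (hx : x ≤ 1) :
    (1 - 2 * n * x) / 2 ^ n ≤ (1 / 2 - x) ^ n := by
  have bernoulli : 1 + n * (-2 * x) ≤ (1 + -2 * x) ^ n := one_add_mul_le_pow (by linarith) n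
  calc (1 - 2 * n * x) / 2 ^ n ≤ (1 + -2 * x) ^ n / 2 ^ n := by gcongr; linarith
    _ = (1 / 2 - x) ^ n := by rw [← div_pow]; ring_nf

lemma pow_mul_one_sub_pow_le {p : ℝ} (hp₀ : 0 ≤ p) (hp₁ : p ≤ 1) (n : ℕ) :
    p ^ n * (1 - p) ^ n ≤ (1 / 4) ^ n := by
  rw [← mul_pow]
  exact pow_le_pow_left₀ (mul_nonneg hp₀ (by linarith)) (by nlinarith [sq_nonneg (2 * p - 1)]) n

lemma one_sub_pow_le_of_div_two_pow_le_pow {p c : ℝ} (hp₀ : 0 ≤ p) (hp₁ : p ≤ 1) (hc : 0 < c)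
    {n : ℕ} (h : c / 2 ^ n ≤ p ^ n) : (1 - p) ^ n ≤ 1 / (c * 2 ^ n) := by
  have hpn : 0 < p ^ n := (by positivity : 0 < c / 2 ^ n).trans_le h
  calc (1 - p) ^ n ≤ (1 / 4) ^ n / p ^ n := by
        rw [le_div_iff₀ hpn, mul_comm]; exact pow_mul_one_sub_pow_le hp₀ hp₁ n
    _ ≤ (1 / 4) ^ n / (c / 2 ^ n) := by gcongr
    _ = 1 / (c * 2 ^ n) := by
        rw [div_pow, one_pow, show (4 : ℝ) ^ n = 2 ^ n * 2 ^ n by rw [← mul_pow]; norm_num]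
        field_simp

theorem almost_fair_coin_powers_general (k : ℕ) :
    1 / (2 * (2 : ℝ) ^ k) ≤ ((1 : ℝ) / 2 - 1 / (10 * k)) ^ k ∧
    ((1 : ℝ) / 2 + 1 / (10 * k)) ^ k ≤ 2 / (2 : ℝ) ^ k := by
  set x : ℝ := 1 / (10 * k)
  have hx : x = (k : ℝ)⁻¹ / 10 := by simp only [x, one_div, mul_inv]; ring
  have hx₀ : 0 ≤ x := by positivity
  have hx₁ : x ≤ 1 / 10 := by rw [hx]; gcongr; exact Nat.cast_inv_le_one k
  have hkx : k * x ≤ 1 / 10 := by rw [hx, mul_div_assoc']; gcongr; exact mul_inv_le_one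
  have lower : 1 / 2 / 2 ^ k ≤ (1 / 2 - x) ^ k :=
    calc 1 / 2 / (2 : ℝ) ^ k ≤ (1 - 2 * k * x) / 2 ^ k := by gcongr; linarith
      _ ≤ (1 / 2 - x) ^ k := one_sub_mul_div_two_pow_le_half_sub_pow k (by linarith)
  constructor
  · rwa [← div_div]
  · calc (1 / 2 + x) ^ k = (1 - (1 / 2 - x)) ^ k := by ring
      _ ≤ 1 / (1 / 2 * 2 ^ k) :=
        one_sub_pow_le_of_div_two_pow_le_pow (by linarith) (by linarith) one_half_pos lower
      _ = 2 / 2 ^ k := by field_simp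

/-- For every `k ≥ 1`: `(1/2 − 1/(10k))^k ≥ 1/(2·2^k)` and `(1/2 + 1/(10k))^k ≤ 2/2^k`. -/
theorem almost_fair_coin_powers (k : ℕ) (hk : 1 ≤ k) :
    1 / (2 * (2 : ℝ) ^ k) ≤ ((1 : ℝ) / 2 - 1 / (10 * k)) ^ k ∧
    ((1 : ℝ) / 2 + 1 / (10 * k)) ^ k ≤ 2 / (2 : ℝ) ^ k :=
  almost_fair_coin_powers_general k
end

section
/- Let n ≥ 2 and r be natural numbers with 2 ≤ r ≤ n, let b be a real number with b > log₂ e, and let t be a natural number with t ≥ b·n·log n. If Z is a binomial random variable with t trials and success probability 1/n, then Pr[Z < log₂ r] ≤ n^(−(1 − (log₂ e)/b)²·b/2). -/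
open scoped ENNReal

/-!
Exponential-moment method: for `s ≥ 0` the indicator of `{Z < a}` is at most `exp (s (a - Z))`, so
`P[Z < a] ≤ exp (s a) (p e⁻ˢ + 1 - p)ᵗ ≤ exp (s a + t p (e⁻ˢ - 1))`. Taking `s = δ`,
`μ = b log n ≤ t p` and `a = log₂ r ≤ log₂ n = (1 - δ) μ` with `δ = 1 - log₂ e / b`, the estimate
`e⁻ᵟ - 1 ≤ -δ + δ² / 2` turns the exponent into `-δ² μ / 2`, and
`exp (-δ² b log n / 2) = n ^ (-δ² b / 2)`.
-/

/-- The binomial `PMF` with an `ℝ≥0∞`-valued parameter, as `PMF.binomial` was defined in the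
older Mathlib. -/
noncomputable def binomialENNReal (p : ℝ≥0∞) (h : p ≤ 1) (n : ℕ) : PMF (Fin (n + 1)) :=
  .ofFintype (fun i => p ^ (i : ℕ) * (1 - p) ^ ((Fin.last n - i) : ℕ) * (n.choose i : ℕ)) (by
    convert (add_pow p (1 - p) n).symm
    · rw [Finset.sum_fin_eq_sum_range]
      apply Finset.sum_congr rfl
      intro i hi
      rw [Finset.mem_range] at hi
      rw [dif_pos hi, Fin.last]
    · simp [h])

open Real

lemma Real.exp_neg_le_one_sub_add_sq_div_two {x : ℝ} (hx : 0 ≤ x) :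
    exp (-x) ≤ 1 - x + x ^ 2 / 2 := by
  have h_exp : 1 + x + x ^ 2 / 2 ≤ exp x := quadratic_le_exp_of_nonneg hx
  rw [exp_neg, inv_le_iff_one_le_mul₀ (exp_pos x)]
  nlinarith [mul_le_mul_of_nonneg_left h_exp (by nlinarith : (0 : ℝ) ≤ 1 - x + x ^ 2 / 2)]

lemma ENNReal.toReal_le_one_of_le_one {p : ℝ≥0∞} (hp : p ≤ 1) : p.toReal ≤ 1 := by
  simpa using ENNReal.toReal_mono ENNReal.one_ne_top hp

lemma binomialENNReal_apply (p : ℝ≥0∞) (hp : p ≤ 1) (t : ℕ) (k : Fin (t + 1)) :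
    binomialENNReal p hp t k =
      ENNReal.ofReal (p.toReal ^ (k : ℕ) * (1 - p.toReal) ^ (t - k) * t.choose k) := by
  have hp_top : p ≠ ∞ := ne_top_of_le_ne_top ENNReal.one_ne_top hp
  have hq : 0 ≤ 1 - p.toReal := sub_nonneg.2 (ENNReal.toReal_le_one_of_le_one hp)
  rw [binomialENNReal, PMF.ofFintype_apply, Fin.val_last, ENNReal.ofReal_mul (by positivity),
    ENNReal.ofReal_mul (by positivity), ENNReal.ofReal_pow ENNReal.toReal_nonneg,
    ENNReal.ofReal_pow hq, ENNReal.ofReal_sub _ ENNReal.toReal_nonneg, ENNReal.ofReal_one,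
    ENNReal.ofReal_toReal hp_top, ENNReal.ofReal_natCast]

/-- The moment generating function of `Bin(t, p)` at `-s`. -/
lemma sum_binomial_mul_exp_neg (p s : ℝ) (t : ℕ) :
    ∑ k ∈ Finset.range (t + 1), p ^ k * (1 - p) ^ (t - k) * t.choose k * exp (-s * k) =
      (p * exp (-s) + (1 - p)) ^ t := by
  rw [add_pow]
  refine Finset.sum_congr rfl fun k _ => ?_
  rw [mul_pow, ← exp_nat_mul, mul_comm (k : ℝ)]
  ring

lemma binomialENNReal_toMeasure_lt_le_exp_mul_pow (p : ℝ≥0∞) (hp : p ≤ 1) (t : ℕ) (a : ℝ)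
    {s : ℝ} (hs : 0 ≤ s) :
    (binomialENNReal p hp t).toMeasure {k | (k : ℝ) < a} ≤
      ENNReal.ofReal (exp (s * a) * (p.toReal * exp (-s) + (1 - p.toReal)) ^ t) := by
  classical
  have hq : 0 ≤ 1 - p.toReal := sub_nonneg.2 (ENNReal.toReal_le_one_of_le_one hp)
  set w : ℕ → ℝ := fun k => p.toReal ^ k * (1 - p.toReal) ^ (t - k) * t.choose k
  calc (binomialENNReal p hp t).toMeasure {k | (k : ℝ) < a}
      ≤ ∑ k : Fin (t + 1), ENNReal.ofReal (exp (s * a) * (w k * exp (-s * k))) := by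
        rw [PMF.toMeasure_apply_fintype]
        gcongr with k
        rw [Set.indicator_apply]
        split_ifs with hk
        · rw [binomialENNReal_apply]
          refine ENNReal.ofReal_le_ofReal ?_
          -- Markov's inequality for `exp (-s Z)`: on `{Z < a}`, `exp (s (a - Z)) ≥ 1`
          have h_one : 1 ≤ exp (s * (a - k)) := one_le_exp (mul_nonneg hs (by simpa using hk.le))
          calc w k = w k * 1 := (mul_one _).symm
            _ ≤ w k * exp (s * (a - k)) := by gcongr
            _ = exp (s * a) * (w k * exp (-s * k)) := by rw [mul_left_comm, ← exp_add]; ring_nf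
        · exact zero_le
    _ = ENNReal.ofReal (exp (s * a) * ∑ k ∈ Finset.range (t + 1), w k * exp (-s * k)) := by
        rw [← ENNReal.ofReal_sum_of_nonneg (fun k _ => by positivity), Finset.mul_sum,
          Fin.sum_univ_eq_sum_range (fun k => exp (s * a) * (w k * exp (-s * k)))]
    _ = _ := by rw [sum_binomial_mul_exp_neg]

/-- Chernoff's lower-tail bound `P[Z < (1 - δ) μ] ≤ exp (-δ² μ / 2)` for `Z ~ Bin(t, p)`
and any `μ ≤ E[Z]`. -/
theorem binomialENNReal_toMeasure_lt_le_exp_neg_sq (p : ℝ≥0∞) (hp : p ≤ 1) (t : ℕ)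
    {δ μ a : ℝ} (hδ : 0 ≤ δ) (hμ : 0 ≤ μ) (hμt : μ ≤ t * p.toReal) (ha : a ≤ (1 - δ) * μ) :
    (binomialENNReal p hp t).toMeasure {k | (k : ℝ) < a} ≤
      ENNReal.ofReal (exp (-(δ ^ 2 * μ / 2))) := by
  refine (binomialENNReal_toMeasure_lt_le_exp_mul_pow p hp t a hδ).trans
    (ENNReal.ofReal_le_ofReal ?_)
  have hq : 0 ≤ 1 - p.toReal := sub_nonneg.2 (ENNReal.toReal_le_one_of_le_one hp)
  have h_base : p.toReal * exp (-δ) + (1 - p.toReal) ≤ exp (p.toReal * (exp (-δ) - 1)) := by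
    linarith [add_one_le_exp (p.toReal * (exp (-δ) - 1))]
  have h_exponent : δ * a + t * p.toReal * (exp (-δ) - 1) ≤ -(δ ^ 2 * μ / 2) := by
    have h_neg : exp (-δ) - 1 ≤ 0 := by linarith [exp_le_one_iff.2 (neg_nonpos.2 hδ)]
    have h_quad : exp (-δ) - 1 ≤ -δ + δ ^ 2 / 2 := by
      linarith [exp_neg_le_one_sub_add_sq_div_two hδ]
    nlinarith [mul_le_mul_of_nonneg_left ha hδ, mul_le_mul_of_nonpos_right hμt h_neg,
      mul_le_mul_of_nonneg_left h_quad hμ]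
  calc exp (δ * a) * (p.toReal * exp (-δ) + (1 - p.toReal)) ^ t
      ≤ exp (δ * a) * exp (p.toReal * (exp (-δ) - 1)) ^ t := by gcongr
    _ = exp (δ * a + t * p.toReal * (exp (-δ) - 1)) := by
        rw [← exp_nat_mul, ← exp_add, mul_assoc]
    _ ≤ exp (-(δ ^ 2 * μ / 2)) := exp_le_exp.2 h_exponent

/-- Chernoff-bound core of deputy election: if `Z ~ Bin(t, 1/n)` with `t ≥ b·n·log n`
and `b > log₂ e`, then `Pr[Z < log₂ r] ≤ n^(−(1 − (log₂ e)/b)²·b/2)`. -/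
theorem deputy_election_chernoff (n r t : ℕ) (b : ℝ) (hn : 2 ≤ n) (hr : 2 ≤ r)
    (hrn : r ≤ n) (hb : Real.logb 2 (Real.exp 1) < b)
    (ht : b * n * Real.log n ≤ t)
    (hp : (1 : ℝ≥0∞) / n ≤ 1) :
    (binomialENNReal (1 / n) hp t).toMeasure {k : Fin (t + 1) | (k : ℝ) < Real.logb 2 r} ≤
      ENNReal.ofReal ((n : ℝ) ^ (-(1 - Real.logb 2 (Real.exp 1) / b) ^ 2 * b / 2)) := by
  have hn0 : (0 : ℝ) < n := by positivity
  have hc : 0 < logb 2 (exp 1) := logb_pos one_lt_two (one_lt_exp_iff.2 one_pos)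
  have hb0 : 0 < b := hc.trans hb
  have h_log : 0 ≤ log n := log_nonneg (by exact_mod_cast (by omega : 1 ≤ n))
  have h_mean : b * log n ≤ t * (1 / (n : ℝ≥0∞)).toReal := by
    rw [ENNReal.toReal_div, ENNReal.toReal_one, ENNReal.toReal_natCast, mul_one_div,
      le_div_iff₀ hn0]
    linarith
  have h_target : logb 2 r ≤ (1 - (1 - logb 2 (exp 1) / b)) * (b * log n) := by
    have h_eq : (1 - (1 - logb 2 (exp 1) / b)) * (b * log n) = logb 2 n := by
      rw [logb, logb, log_exp]
      field_simp
      ring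
    rw [h_eq]
    exact logb_le_logb_of_le one_lt_two (Nat.cast_pos.2 (by omega)) (by exact_mod_cast hrn)
  calc _ ≤ ENNReal.ofReal (exp (-((1 - logb 2 (exp 1) / b) ^ 2 * (b * log n) / 2))) :=
        binomialENNReal_toMeasure_lt_le_exp_neg_sq _ hp t
          (sub_nonneg.2 ((div_le_one hb0).2 hb.le)) (by positivity) h_mean h_target
    _ = _ := by rw [rpow_def_of_pos hn0]; ring_nf
end

section
/- Let n ≥ 2 be a natural number, let f ≥ 4 be a real number, and let t = ⌈f·n·log n⌉. If X is a binomial random variable with t trials and success probability 2/n, then Pr[X ≥ 6·f·log n] ≤ n^(−f). -/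
/-!
Exponential Markov inequality with base `2`: for `X ~ Bin(t, p)`,
`Pr[X ≥ a] ≤ 2^(-a) · E[2^X] = 2^(-a) (1 + p)^t ≤ exp (p t - a log 2)`.
With `p = 2/n` and `t ≤ f n log n + 1` the exponent is at most `2 f log n + 1 - 6 f log n log 2`,
which is below `-f log n` because `f log n (6 log 2 - 3) ≥ 4 log 2 (6 log 2 - 3) > 1`.
-/

open scoped ENNReal NNReal
open Real

set_option linter.deprecated false

namespace PMF

theorem sum_binomial_mul_pow (p : ℝ≥0) (hp : p ≤ 1) (t : ℕ) (c : ℝ≥0∞) :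
    ∑ i, binomial p hp t i * c ^ (i : ℕ) = (p * c + (1 - p)) ^ t := by
  rw [add_pow, ← Fin.sum_univ_eq_sum_range]
  refine Finset.sum_congr rfl fun i _ => ?_
  rw [binomial_apply, Fin.val_last, mul_pow]
  ring

theorem toMeasure_le_rpow_neg_mul_sum {α : Type*} [Fintype α] [MeasurableSpace α]
    [MeasurableSingletonClass α] (μ : PMF α) (X : α → ℝ) (a : ℝ)
    {c : ℝ≥0∞} (hc : 1 ≤ c) (hc_top : c ≠ ⊤) :
    μ.toMeasure {x | a ≤ X x} ≤ c ^ (-a) * ∑ x, μ x * c ^ X x := by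
  rw [toMeasure_apply_fintype, Finset.mul_sum]
  refine Finset.sum_le_sum fun x _ => ?_
  by_cases hx : a ≤ X x
  · have hc0 : c ≠ 0 := (zero_lt_one.trans_le hc).ne'
    have h1 : 1 ≤ c ^ (-a) * c ^ X x := by
      rw [← ENNReal.rpow_add _ _ hc0 hc_top, ← ENNReal.rpow_zero (x := c)]
      exact ENNReal.rpow_le_rpow_of_exponent_le hc (by linarith)
    rw [Set.indicator_of_mem (show x ∈ {x | a ≤ X x} from hx)]
    calc μ x ≤ (c ^ (-a) * c ^ X x) * μ x := le_mul_of_one_le_left zero_le h1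
      _ = c ^ (-a) * (μ x * c ^ X x) := by ring
  · rw [Set.indicator_of_notMem (show x ∉ {x | a ≤ X x} from hx)]
    exact zero_le

theorem toMeasure_binomial_le_rpow_neg_mul_pow (p : ℝ≥0) (hp : p ≤ 1) (t : ℕ) (a : ℝ)
    {c : ℝ≥0∞} (hc : 1 ≤ c) (hc_top : c ≠ ⊤) :
    (binomial p hp t).toMeasure {k : Fin (t + 1) | a ≤ (k : ℝ)} ≤
      c ^ (-a) * (p * c + (1 - p)) ^ t := by
  calc _ ≤ c ^ (-a) * ∑ k : Fin (t + 1), binomial p hp t k * c ^ ((k : ℕ) : ℝ) :=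
        toMeasure_le_rpow_neg_mul_sum _ (fun k : Fin (t + 1) => (k : ℝ)) a hc hc_top
    _ = _ := by simp only [ENNReal.rpow_natCast, sum_binomial_mul_pow]

end PMF

theorem rpow_neg_mul_one_add_pow_le_exp {c : ℝ} (hc : 0 < c) (a : ℝ) {p : ℝ} (hp : 0 ≤ p)
    (t : ℕ) : c ^ (-a) * (1 + p) ^ t ≤ exp (p * t - a * log c) := by
  have h_pow : (1 + p) ^ t ≤ exp p ^ t := by gcongr; linarith [add_one_le_exp p]
  calc c ^ (-a) * (1 + p) ^ t ≤ exp (log c * -a) * exp p ^ t := by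
        rw [rpow_def_of_pos hc]; gcongr
    _ = exp (p * t - a * log c) := by rw [← exp_nat_mul, ← exp_add]; ring_nf

theorem two_div_mul_sub_six_mul_log_mul_log_two_le {n : ℕ} (hn : 2 ≤ n) {f : ℝ} (hf : 4 ≤ f)
    {t : ℕ} (ht : (t : ℝ) ≤ f * n * log n + 1) :
    2 / n * t - 6 * f * log n * log 2 ≤ -(f * log n) := by
  have hn2 : (2 : ℝ) ≤ n := by exact_mod_cast hn
  have hlog2 : 0.6931471803 < log 2 := log_two_gt_d9
  have hL : log 2 ≤ log n := log_le_log two_pos hn2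
  have h_mean : 2 / n * t ≤ 2 * f * log n + 1 := by
    calc 2 / n * t ≤ 2 / n * (f * n * log n + 1) := by gcongr
      _ = 2 * f * log n + 2 / n := by field_simp
      _ ≤ 2 * f * log n + 1 := by gcongr; rw [div_le_one (by linarith)]; exact hn2
  nlinarith [mul_le_mul hf hL (by linarith) (by linarith)]

/-- Chernoff-bound core of Lemma D.5: if `X ~ Bin(⌈f·n·log n⌉, 2/n)` with `n ≥ 2`
and `f ≥ 4`, then `Pr[X ≥ 6·f·log n] ≤ n^(−f)`. -/
theorem sleep_phase_chernoff (n : ℕ) (f : ℝ) (hn : 2 ≤ n) (hf : 4 ≤ f)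
    (hp : (2 : ℝ≥0∞) / n ≤ 1) :
    (PMF.binomial ((2 : ℝ≥0∞) / n).toNNReal
      (le_of_le_of_eq (ENNReal.toNNReal_mono ENNReal.one_ne_top hp) ENNReal.toNNReal_one) ⌈f * n * Real.log n⌉₊).toMeasure
        {k : Fin (⌈f * n * Real.log n⌉₊ + 1) | 6 * f * Real.log n ≤ (k : ℝ)} ≤
      ENNReal.ofReal ((n : ℝ) ^ (-f)) := by
  set t := ⌈f * n * log n⌉₊
  set a := 6 * f * log n
  have hp_top : (2 : ℝ≥0∞) / n ≠ ⊤ := ne_top_of_le_ne_top ENNReal.one_ne_top hp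
  have h_mgf : (2 : ℝ≥0∞) / n * 2 + (1 - 2 / n) = 1 + 2 / n := by
    rw [mul_two, add_assoc, add_tsub_cancel_of_le hp, add_comm]
  have h_toReal : ((2 : ℝ≥0∞) ^ (-a) * (1 + 2 / n) ^ t).toReal = 2 ^ (-a) * (1 + 2 / n) ^ t := by
    simp [ENNReal.toReal_mul, ← ENNReal.toReal_rpow, ENNReal.toReal_add, hp_top]
  have hL : 0 ≤ log n := log_nonneg (by norm_cast; omega)
  have ht : (t : ℝ) ≤ f * n * log n + 1 := (Nat.ceil_lt_add_one (by positivity)).le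
  calc _ ≤ _ := PMF.toMeasure_binomial_le_rpow_neg_mul_pow _ _ t a one_le_two ENNReal.ofNat_ne_top
    _ = (2 : ℝ≥0∞) ^ (-a) * (1 + 2 / n) ^ t := by rw [ENNReal.coe_toNNReal hp_top, h_mgf]
    _ ≤ ENNReal.ofReal ((n : ℝ) ^ (-f)) := by
        rw [ENNReal.le_ofReal_iff_toReal_le (by finiteness) (by positivity), h_toReal]
        calc (2 : ℝ) ^ (-a) * (1 + 2 / n) ^ t ≤ exp (2 / n * t - a * log 2) :=
              rpow_neg_mul_one_add_pow_le_exp two_pos a (by positivity) t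
          _ ≤ exp (-(f * log n)) :=
              exp_le_exp.2 (two_div_mul_sub_six_mul_log_mul_log_two_le hn hf ht)
          _ = (n : ℝ) ^ (-f) := by rw [rpow_def_of_pos (by positivity)]; ring_nf
end
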